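/- Let Φ be a branching mechanism satisfying Assumption H0 (Φ(λ₀) > 0 for some λ₀ > 0), with Lévy measure π and largest root q of Φ. For r > 0, the truncated mechanism Φ^{(r,∞)} also satisfies Assumption H0, and its inverse (Φ^{(r,∞)})^{−1}(a) (the unique b ≥ q_r with Φ^{(r,∞)}(b) = a, where q_r is the largest root of Φ^{(r,∞)}) is well-defined for a ≥ 0. Then lim_{r→∞} (Φ^{(r,∞)})^{−1}(π((r,∞))) = q = Φ^{−1}(0). In particular, lim_{r→∞} (Φ^{(r,∞)})^{−1}(0) = Φ^{−1}(0). -/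

import Mathlib

open MeasureTheory Filter Set

/-- The branching mechanism `Φ(λ) = αλ + βλ² + ∫_{(0,∞)} (e^{-λθ} - 1 + λθ) π(dθ)`. -/
noncomputable def Phi (α β : ℝ) (π : Measure ℝ) (lam : ℝ) : ℝ :=
  α * lam + β * lam ^ 2 + ∫ θ, (Real.exp (-lam * θ) - 1 + lam * θ) ∂π

/-- The `(r,∞)`-truncated branching mechanism
`Φ^{(r,∞)}(λ) = Φ(λ) + ∫_{(r,∞)} (1 - e^{-λθ}) π(dθ)`. -/
noncomputable def PhiIoi (α β : ℝ) (π : Measure ℝ) (r lam : ℝ) : ℝ :=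
  Phi α β π lam + ∫ θ in Set.Ioi r, (1 - Real.exp (-lam * θ)) ∂π

/-!
`Φ` is convex on `[0, ∞)` with `Φ 0 = 0 = Φ q`, hence positive and nondecreasing on `(q, ∞)`;
it is even strictly convex, hence negative on `(0, q)`, unless `β = 0` and `π = 0`, in which case
`Φ` is linear and H0 forces `q = 0`. For `r > 0` and `λ ≥ 0`,
`Φ λ ≤ Φ^{(r,∞)} λ ≤ Φ λ + π (r, ∞)` with `π (r, ∞) → 0`. So for levels `a_r → 0` the largest
root of `Φ^{(r,∞)} = a_r` eventually lies below every `d > q` (there `Φ ≥ Φ d > a_r`), and, by the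
intermediate value theorem, above every `c ∈ (0, q)` with `Φ^{(r,∞)} c ≤ a_r`: for
`a_r = π (r, ∞)` this holds as `Φ c ≤ 0`, for `a_r = 0` eventually as `Φ c < 0`.
-/

open Topology

section Roots

variable {f : ℝ → ℝ} {q : ℝ}

lemma le_of_isGreatest_level {a u c T : ℝ} (hu : IsGreatest {b | 0 ≤ b ∧ f b = a} u)
    (hf : ContinuousOn f (Ici 0)) (hc : 0 ≤ c) (hcT : c ≤ T) (hfc : f c ≤ a) (hfT : a ≤ f T) :
    c ≤ u := by
  obtain ⟨z, hz, hfz⟩ := intermediate_value_Icc hcT (hf.mono fun x hx => hc.trans hx.1) ⟨hfc, hfT⟩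
  exact hz.1.trans (hu.2 ⟨hc.trans hz.1, hfz⟩)

lemma ConvexOn.nonpos_of_mem_Icc {s : Set ℝ} (hf : ConvexOn ℝ s f) {x y z : ℝ} (hx : x ∈ s)
    (hy : y ∈ s) (hfx : f x ≤ 0) (hfy : f y ≤ 0) (hz : z ∈ Icc x y) : f z ≤ 0 :=
  (hf.le_on_segment hx hy (segment_eq_Icc (hz.1.trans hz.2) ▸ hz)).trans (max_le hfx hfy)

lemma ConvexOn.pos_of_isGreatest_zeros (hf : ConvexOn ℝ (Ici 0) f)
    (hfc : ContinuousOn f (Ici 0)) (hf0 : f 0 = 0) (hq : IsGreatest {x | 0 ≤ x ∧ f x = 0} q)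
    {l : ℝ} (hl : 0 ≤ l) (hfl : 0 < f l) {d : ℝ} (hd : q < d) : 0 < f d := by
  have hd0 : 0 ≤ d := hq.1.1.trans hd.le
  by_contra! hfd
  rcases le_or_gt l d with hld | hdl
  · exact hfl.not_ge (hf.nonpos_of_mem_Icc (mem_Ici.2 le_rfl) hd0 hf0.le hfd ⟨hl, hld⟩)
  · exact hd.not_ge (le_of_isGreatest_level hq hfc hd0 hdl.le hfd hfl.le)

lemma ConvexOn.monotoneOn_Ioi_of_le (hf : ConvexOn ℝ (Ici 0) f) (hq0 : 0 ≤ q)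
    (h : ∀ x, q < x → f q ≤ f x) : MonotoneOn f (Ioi q) :=
  fun x hx _ hy hxy =>
    hf.le_right_of_left_le'' hq0 (hq0.trans (mem_Ioi.1 hy).le) hx hxy (h x hx)

lemma tendsto_of_isGreatest_level {F inv : ℝ → ℝ → ℝ} {a : ℝ → ℝ}
    (hpos : ∀ d, q < d → 0 < f d) (hmono : MonotoneOn f (Ioi q))
    (hfF : ∀ r, 0 < r → ∀ l, 0 ≤ l → f l ≤ F r l)
    (hFc : ∀ r, 0 < r → ContinuousOn (F r) (Ici 0))
    (hinv : ∀ r, 0 < r → ∀ a, 0 ≤ a → IsGreatest {b | 0 ≤ b ∧ F r b = a} (inv r a))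
    (ha0 : ∀ r, 0 ≤ a r) (ha : Tendsto a atTop (𝓝 0))
    (hlow : ∀ c ∈ Ioo 0 q, ∀ᶠ r in atTop, F r c ≤ a r) :
    Tendsto (fun r => inv r (a r)) atTop (𝓝 q) := by
  refine tendsto_order.2 ⟨fun c hc => ?_, fun d hd => ?_⟩
  · rcases lt_or_ge c 0 with hc0 | hc0
    · filter_upwards [eventually_gt_atTop 0] with r hr
      exact hc0.trans_le (hinv r hr _ (ha0 r)).1.1
    have hc' : (c + q) / 2 ∈ Ioo 0 q := ⟨by linarith, by linarith⟩
    have hT : 0 < f (q + 1) := hpos _ (lt_add_one q)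
    filter_upwards [eventually_gt_atTop 0, hlow _ hc', ha.eventually (gt_mem_nhds hT)]
      with r hr hFc' haT
    calc c < (c + q) / 2 := by linarith
      _ ≤ inv r (a r) := le_of_isGreatest_level (hinv r hr _ (ha0 r)) (hFc r hr) hc'.1.le
          (by linarith [hc'.2]) hFc' (haT.le.trans (hfF r hr _ (by linarith)))
  · filter_upwards [eventually_gt_atTop 0, ha.eventually (gt_mem_nhds (hpos d hd))]
      with r hr had
    obtain ⟨⟨hu0, hFu⟩, -⟩ := hinv r hr _ (ha0 r)
    by_contra! hdu
    have := hmono hd (hd.trans_le hdu) hdu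
    linarith [hfF r hr _ hu0]

end Roots

section Kernel

open Real

lemma exp_neg_sub_one_add_nonneg (x : ℝ) : 0 ≤ exp (-x) - 1 + x := by
  linarith [add_one_le_exp (-x)]

lemma exp_neg_sub_one_add_le_min {x : ℝ} (hx : 0 ≤ x) : exp (-x) - 1 + x ≤ min x (x ^ 2) := by
  have hexp : exp (-x) * exp x = 1 := by rw [← exp_add, neg_add_cancel, exp_zero]
  refine le_min (by linarith [exp_le_one_iff.2 (neg_nonpos.2 hx)]) ?_
  nlinarith [mul_le_mul_of_nonneg_left (add_one_le_exp x) (exp_pos (-x)).le,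
    mul_le_mul_of_nonneg_left (add_one_le_exp (-x)) hx]

lemma norm_exp_neg_mul_sub_one_add_mul_le {l c θ : ℝ} (hl : 0 ≤ l) (hlc : l ≤ c) (hθ : 0 ≤ θ) :
    ‖exp (-l * θ) - 1 + l * θ‖ ≤ max c (c ^ 2) * min θ (θ ^ 2) := by
  have h := exp_neg_sub_one_add_le_min (mul_nonneg hl hθ)
  rw [neg_mul, Real.norm_of_nonneg (exp_neg_sub_one_add_nonneg _)]
  rcases le_total θ 1 with hθ1 | hθ1
  · rw [min_eq_right (by nlinarith)]
    calc _ ≤ (l * θ) ^ 2 := h.trans (min_le_right _ _)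
      _ = l ^ 2 * θ ^ 2 := by ring
      _ ≤ max c (c ^ 2) * θ ^ 2 := by
        gcongr; exact (pow_le_pow_left₀ hl hlc 2).trans (le_max_right _ _)
  · rw [min_eq_left (by nlinarith)]
    calc _ ≤ l * θ := h.trans (min_le_left _ _)
      _ ≤ max c (c ^ 2) * θ := by gcongr; exact hlc.trans (le_max_left _ _)

lemma strictConvexOn_exp_neg_mul_sub_one_add_mul {s : Set ℝ} (hs : Convex ℝ s) {θ : ℝ}
    (hθ : θ ≠ 0) : StrictConvexOn ℝ s fun l => exp (-l * θ) - 1 + l * θ := by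
  refine ⟨hs, fun x _ y _ hxy a b ha hb hab => ?_⟩
  have hne : -x * θ ≠ -y * θ := fun h => hxy (by simpa [hθ] using h)
  have := strictConvexOn_exp.2 (mem_univ _) (mem_univ _) hne ha hb hab
  simp only [smul_eq_mul] at this ⊢
  rw [show -(a * x + b * y) * θ = a * (-x * θ) + b * (-y * θ) by ring]
  linarith

lemma one_sub_exp_neg_mul_nonneg {l θ : ℝ} (hl : 0 ≤ l) (hθ : 0 ≤ θ) :
    0 ≤ 1 - exp (-l * θ) :=
  sub_nonneg.2 (exp_le_one_iff.2 (by nlinarith))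

lemma norm_one_sub_exp_neg_mul_le_one {l θ : ℝ} (hl : 0 ≤ l) (hθ : 0 ≤ θ) :
    ‖1 - exp (-l * θ)‖ ≤ 1 := by
  rw [Real.norm_of_nonneg (one_sub_exp_neg_mul_nonneg hl hθ)]
  linarith [exp_pos (-l * θ)]

end Kernel

lemma integral_strictConvexOn_of_integrand {Ω E : Type*} [MeasurableSpace Ω] {μ : Measure Ω}
    [AddCommMonoid E] [Module ℝ E] {f : Ω → E → ℝ} {s : Set E} (hs : Convex ℝ s)
    (hf_conv : ∀ᵐ x ∂μ, ConvexOn ℝ s (f x))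
    (hf_strict : 0 < μ {x | StrictConvexOn ℝ s (f x)})
    (hf_int : ∀ a ∈ s, Integrable (f · a) μ) :
    StrictConvexOn ℝ s fun b => ∫ x, f x b ∂μ := by
  refine ⟨hs, fun a ha b hb hab p q hp hq hpq => ?_⟩
  have hmem : p • a + q • b ∈ s := hs ha hb hp.le hq.le hpq
  have hint_a := (hf_int a ha).const_mul p
  have hint_ab : Integrable (fun x => p * f x a + q * f x b) μ :=
    hint_a.add ((hf_int b hb).const_mul q)
  have hgap_nonneg : 0 ≤ᵐ[μ] fun x => p * f x a + q * f x b - f x (p • a + q • b) := by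
    filter_upwards [hf_conv] with x hx
    exact sub_nonneg.2 (hx.2 ha hb hp.le hq.le hpq)
  have hgap_pos := (integral_pos_iff_support_of_nonneg_ae hgap_nonneg
    (hint_ab.sub (hf_int _ hmem))).2 <| hf_strict.trans_le <|
      measure_mono fun x hx => (sub_pos.2 (hx.2 ha hb hab hp hq hpq)).ne'
  rw [integral_sub hint_ab (hf_int _ hmem), integral_add hint_a ((hf_int b hb).const_mul q),
    integral_const_mul, integral_const_mul] at hgap_pos
  simp only [smul_eq_mul]
  linarith

section Mechanism

variable {α β : ℝ} {π : Measure ℝ}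

lemma ae_pos_of_measure_Iic_zero (hsupp : π (Iic 0) = 0) : ∀ᵐ θ ∂π, 0 < θ :=
  (measure_eq_zero_iff_ae_notMem.1 hsupp).mono fun _ h => not_le.1 h

lemma integrable_exp_neg_mul_sub_one_add_mul (hsupp : π (Iic 0) = 0)
    (hint : Integrable (fun θ => min θ (θ ^ 2)) π) {l : ℝ} (hl : 0 ≤ l) :
    Integrable (fun θ => Real.exp (-l * θ) - 1 + l * θ) π :=
  (hint.const_mul (max l (l ^ 2))).mono' (by fun_prop)
    ((ae_pos_of_measure_Iic_zero hsupp).mono fun _ hθ =>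
      norm_exp_neg_mul_sub_one_add_mul_le hl le_rfl hθ.le)

lemma Phi_zero : Phi α β π 0 = 0 := by
  simp [Phi]

lemma continuousOn_Phi (hsupp : π (Iic 0) = 0)
    (hint : Integrable (fun θ => min θ (θ ^ 2)) π) :
    ContinuousOn (Phi α β π) (Ici 0) := by
  refine (by fun_prop : Continuous fun l : ℝ => α * l + β * l ^ 2).continuousOn.add ?_
  intro l₀ _
  have hnear : ∀ᶠ l in 𝓝[Ici 0] l₀, l ∈ Icc 0 (l₀ + 1) := by
    filter_upwards [self_mem_nhdsWithin,
      nhdsWithin_le_nhds (Iio_mem_nhds (lt_add_one l₀))] with l h0 h1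
    exact ⟨h0, h1.le⟩
  refine continuousWithinAt_of_dominated (Eventually.of_forall fun _ => by fun_prop)
    (hnear.mono fun l hl => ?_) (hint.const_mul (max (l₀ + 1) ((l₀ + 1) ^ 2)))
    (Eventually.of_forall fun _ => by fun_prop)
  filter_upwards [ae_pos_of_measure_Iic_zero hsupp] with θ hθ
  exact norm_exp_neg_mul_sub_one_add_mul_le hl.1 hl.2 hθ.le

lemma convexOn_mul_add_mul_sq {s : Set ℝ} (hs : Convex ℝ s) (α : ℝ) {β : ℝ} (hβ : 0 ≤ β) :
    ConvexOn ℝ s fun l : ℝ => α * l + β * l ^ 2 := by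
  refine ⟨hs, fun x _ y _ a b ha hb hab => ?_⟩
  obtain rfl : a = 1 - b := eq_sub_of_add_eq hab
  simp only [smul_eq_mul]
  nlinarith [mul_nonneg hβ (mul_nonneg (mul_nonneg ha hb) (sq_nonneg (x - y)))]

lemma strictConvexOn_mul_add_mul_sq {s : Set ℝ} (hs : Convex ℝ s) (α : ℝ) {β : ℝ} (hβ : 0 < β) :
    StrictConvexOn ℝ s fun l : ℝ => α * l + β * l ^ 2 := by
  refine ⟨hs, fun x _ y _ hxy a b ha hb hab => ?_⟩
  obtain rfl : a = 1 - b := eq_sub_of_add_eq hab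
  simp only [smul_eq_mul]
  nlinarith [mul_pos hβ (mul_pos (mul_pos ha hb) (sq_pos_of_ne_zero (sub_ne_zero.2 hxy)))]

lemma convexOn_integral_exp_neg_mul_sub_one_add_mul (hsupp : π (Iic 0) = 0)
    (hint : Integrable (fun θ => min θ (θ ^ 2)) π) :
    ConvexOn ℝ (Ici 0) fun l => ∫ θ, (Real.exp (-l * θ) - 1 + l * θ) ∂π :=
  integral_convexOn_of_integrand_ae (convex_Ici 0)
    ((ae_pos_of_measure_Iic_zero hsupp).mono fun _ hθ =>
      (strictConvexOn_exp_neg_mul_sub_one_add_mul (convex_Ici 0) hθ.ne').convexOn)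
    fun _ hl => integrable_exp_neg_mul_sub_one_add_mul hsupp hint hl

lemma strictConvexOn_integral_exp_neg_mul_sub_one_add_mul (hsupp : π (Iic 0) = 0)
    (hint : Integrable (fun θ => min θ (θ ^ 2)) π) (hπ : 0 < π (Ioi 0)) :
    StrictConvexOn ℝ (Ici 0) fun l => ∫ θ, (Real.exp (-l * θ) - 1 + l * θ) ∂π :=
  integral_strictConvexOn_of_integrand (convex_Ici 0)
    ((ae_pos_of_measure_Iic_zero hsupp).mono fun _ hθ =>
      (strictConvexOn_exp_neg_mul_sub_one_add_mul (convex_Ici 0) hθ.ne').convexOn)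
    (hπ.trans_le (measure_mono fun _ hθ =>
      strictConvexOn_exp_neg_mul_sub_one_add_mul (convex_Ici 0) (ne_of_gt hθ)))
    fun _ hl => integrable_exp_neg_mul_sub_one_add_mul hsupp hint hl

lemma convexOn_Phi (α : ℝ) (hβ : 0 ≤ β) (hsupp : π (Iic 0) = 0)
    (hint : Integrable (fun θ => min θ (θ ^ 2)) π) : ConvexOn ℝ (Ici 0) (Phi α β π) :=
  (convexOn_mul_add_mul_sq (convex_Ici 0) α hβ).add
    (convexOn_integral_exp_neg_mul_sub_one_add_mul hsupp hint)

lemma strictConvexOn_Phi (α : ℝ) (hβ : 0 ≤ β) (hsupp : π (Iic 0) = 0)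
    (hint : Integrable (fun θ => min θ (θ ^ 2)) π) (h : 0 < β ∨ 0 < π (Ioi 0)) :
    StrictConvexOn ℝ (Ici 0) (Phi α β π) := by
  rcases h with hβ' | hπ
  · exact (strictConvexOn_mul_add_mul_sq (convex_Ici 0) α hβ').add_convexOn
      (convexOn_integral_exp_neg_mul_sub_one_add_mul hsupp hint)
  · exact (convexOn_mul_add_mul_sq (convex_Ici 0) α hβ).add_strictConvexOn
      (strictConvexOn_integral_exp_neg_mul_sub_one_add_mul hsupp hint hπ)

lemma Phi_eq_of_measure_Ioi_eq_zero (hsupp : π (Iic 0) = 0) (hπ : π (Ioi 0) = 0) (l : ℝ) :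
    Phi α β π l = α * l + β * l ^ 2 := by
  have hπ0 : π = 0 := Measure.measure_univ_eq_zero.1 <| nonpos_iff_eq_zero.1 <| by
    simpa [hsupp, hπ] using measure_union_le (μ := π) (Iic (0 : ℝ)) (Ioi 0)
  simp [Phi, hπ0]

lemma Phi_neg_of_mem_Ioo (hβ : 0 ≤ β) (hsupp : π (Iic 0) = 0)
    (hint : Integrable (fun θ => min θ (θ ^ 2)) π) {l : ℝ} (hl : 0 < Phi α β π l) {q : ℝ}
    (hq : Phi α β π q = 0) {c : ℝ} (hc : c ∈ Ioo 0 q) : Phi α β π c < 0 := by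
  have hq0 : 0 < q := hc.1.trans hc.2
  by_cases hdeg : 0 < β ∨ 0 < π (Ioi 0)
  · have h := (strictConvexOn_Phi α hβ hsupp hint hdeg).lt_on_openSegment (mem_Ici.2 le_rfl)
      (mem_Ici.2 hq0.le) hq0.ne (Ioo_subset_openSegment hc)
    rwa [Phi_zero, hq, max_self] at h
  · simp only [not_or, not_lt] at hdeg
    have hβ0 : β = 0 := le_antisymm hdeg.1 hβ
    simp only [Phi_eq_of_measure_Ioi_eq_zero hsupp (nonpos_iff_eq_zero.1 hdeg.2), hβ0, zero_mul,
      add_zero] at hq hl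
    have hα : α = 0 := (mul_eq_zero.1 hq).resolve_right hq0.ne'
    simp [hα] at hl

lemma measure_Ioi_lt_top_of_integrable (hint : Integrable (fun θ => min θ (θ ^ 2)) π) {r : ℝ}
    (hr : 0 < r) : π (Ioi r) < ⊤ :=
  (measure_mono (show Ioi r ⊆ {θ | min r (r ^ 2) ≤ min θ (θ ^ 2)} from
    fun θ (hθ : r < θ) => min_le_min hθ.le (by nlinarith))).trans_lt
    (hint.measure_ge_lt_top (lt_min hr (by positivity)))

lemma tendsto_measure_Ioi_toReal (hint : Integrable (fun θ => min θ (θ ^ 2)) π) :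
    Tendsto (fun r => (π (Ioi r)).toReal) atTop (𝓝 0) := by
  have h := tendsto_measure_iInter_atTop (μ := π) (fun r => measurableSet_Ioi.nullMeasurableSet)
    (fun _ _ h => Ioi_subset_Ioi h) ⟨1, (measure_Ioi_lt_top_of_integrable hint one_pos).ne⟩
  have hempty : ⋂ r : ℝ, Ioi r = ∅ := iInter_eq_empty_iff.2 fun x => ⟨x, lt_irrefl x⟩
  rw [hempty, measure_empty] at h
  exact (ENNReal.tendsto_toReal ENNReal.zero_ne_top).comp h

lemma Phi_le_PhiIoi {r l : ℝ} (hr : 0 < r) (hl : 0 ≤ l) : Phi α β π l ≤ PhiIoi α β π r l :=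
  le_add_of_nonneg_right <| setIntegral_nonneg measurableSet_Ioi fun _ hθ =>
    one_sub_exp_neg_mul_nonneg hl (hr.trans hθ).le

lemma PhiIoi_le_Phi_add (α β : ℝ) (hint : Integrable (fun θ => min θ (θ ^ 2)) π) {r l : ℝ}
    (hr : 0 < r) (hl : 0 ≤ l) : PhiIoi α β π r l ≤ Phi α β π l + (π (Ioi r)).toReal := by
  have h := norm_setIntegral_le_of_norm_le_const (measure_Ioi_lt_top_of_integrable hint hr)
    fun θ (hθ : θ ∈ Ioi r) => norm_one_sub_exp_neg_mul_le_one hl (hr.trans hθ).le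
  rw [one_mul, measureReal_def] at h
  exact add_le_add_right ((le_abs_self _).trans h) _

lemma continuousOn_PhiIoi (hsupp : π (Iic 0) = 0)
    (hint : Integrable (fun θ => min θ (θ ^ 2)) π) {r : ℝ} (hr : 0 < r) :
    ContinuousOn (PhiIoi α β π r) (Ici 0) :=
  (continuousOn_Phi hsupp hint).add <| continuousOn_of_dominated (bound := fun _ => 1)
    (fun _ _ => by fun_prop)
    (fun l hl => (ae_restrict_mem measurableSet_Ioi).mono fun θ hθ =>
      norm_one_sub_exp_neg_mul_le_one hl (hr.trans hθ).le)
    (integrableOn_const (measure_Ioi_lt_top_of_integrable hint hr).ne)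
    (Eventually.of_forall fun _ => by fun_prop)

end Mechanism

theorem truncated_inverse_limit_general
    (α β : ℝ) (hβ : 0 ≤ β) (π : Measure ℝ)
    (hsupp : π (Set.Iic 0) = 0)
    (hint : Integrable (fun θ => min θ (θ ^ 2)) π)
    (hH0 : ∃ l : ℝ, 0 < l ∧ 0 < Phi α β π l)
    (q : ℝ) (hq0 : 0 ≤ q) (hqroot : Phi α β π q = 0)
    (hqmax : ∀ a : ℝ, 0 ≤ a → Phi α β π a = 0 → a ≤ q) :
    (∀ r : ℝ, 0 < r → ∃ l : ℝ, 0 < l ∧ 0 < PhiIoi α β π r l) ∧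
    (∀ inv : ℝ → ℝ → ℝ,
      (∀ r : ℝ, 0 < r → ∀ a : ℝ, 0 ≤ a →
        0 ≤ inv r a ∧ PhiIoi α β π r (inv r a) = a ∧
        (∀ b : ℝ, 0 ≤ b → PhiIoi α β π r b = a → b ≤ inv r a)) →
      Tendsto (fun r => inv r ((π (Set.Ioi r)).toReal)) atTop (nhds q) ∧
      Tendsto (fun r => inv r 0) atTop (nhds q)) := by
  obtain ⟨l, hl, hΦl⟩ := hH0
  refine ⟨fun r hr => ⟨l, hl, hΦl.trans_le (Phi_le_PhiIoi hr hl.le)⟩, fun inv hinv => ?_⟩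
  have hconv := convexOn_Phi α hβ hsupp hint
  have hq : IsGreatest {x | 0 ≤ x ∧ Phi α β π x = 0} q :=
    ⟨⟨hq0, hqroot⟩, fun a ha => hqmax a ha.1 ha.2⟩
  have hpos : ∀ d, q < d → 0 < Phi α β π d := fun d hd =>
    hconv.pos_of_isGreatest_zeros (continuousOn_Phi hsupp hint) Phi_zero hq hl.le hΦl hd
  have hneg : ∀ c ∈ Ioo 0 q, Phi α β π c < 0 := fun c hc =>
    Phi_neg_of_mem_Ioo hβ hsupp hint hΦl hqroot hc
  have hε := tendsto_measure_Ioi_toReal hint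
  have key : ∀ a : ℝ → ℝ, (∀ r, 0 ≤ a r) → Tendsto a atTop (𝓝 0) →
      (∀ c ∈ Ioo 0 q, ∀ᶠ r in atTop, PhiIoi α β π r c ≤ a r) →
      Tendsto (fun r => inv r (a r)) atTop (𝓝 q) := fun a ha0 ha hlow =>
    tendsto_of_isGreatest_level hpos
      (hconv.monotoneOn_Ioi_of_le hq0 fun x hx => hqroot ▸ (hpos x hx).le)
      (fun r hr l hl => Phi_le_PhiIoi hr hl) (fun r hr => continuousOn_PhiIoi hsupp hint hr)
      (fun r hr a ha =>
        have ⟨h0, h1, h2⟩ := hinv r hr a ha; ⟨⟨h0, h1⟩, fun b hb => h2 b hb.1 hb.2⟩)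
      ha0 ha hlow
  refine ⟨key _ (fun _ => ENNReal.toReal_nonneg) hε fun c hc => ?_,
    key _ (fun _ => le_rfl) tendsto_const_nhds fun c hc => ?_⟩
  · filter_upwards [eventually_gt_atTop 0] with r hr
    linarith [PhiIoi_le_Phi_add α β hint hr hc.1.le, hneg c hc]
  · filter_upwards [eventually_gt_atTop 0,
      hε.eventually (gt_mem_nhds (neg_pos.2 (hneg c hc)))] with r hr hεr
    linarith [PhiIoi_le_Phi_add α β hint hr hc.1.le]

/-- Under Assumption H0, the truncated mechanisms satisfy H0 and
`(Φ^{(r,∞)})⁻¹(π((r,∞))) → q = Φ⁻¹(0)` and `(Φ^{(r,∞)})⁻¹(0) → Φ⁻¹(0)` as `r → ∞`,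
where `q` is the largest root of `Φ` and the inverse value `(Φ^{(r,∞)})⁻¹(a)` is
characterized as the largest nonnegative root of `Φ^{(r,∞)}(·) = a`. -/
theorem truncated_inverse_limit
    (α β : ℝ) (hβ : 0 ≤ β) (π : Measure ℝ)
    (hsupp : π (Set.Iic 0) = 0) (hσ : SigmaFinite π)
    (hint : Integrable (fun θ => min θ (θ ^ 2)) π)
    (hH0 : ∃ l : ℝ, 0 < l ∧ 0 < Phi α β π l)
    (q : ℝ) (hq0 : 0 ≤ q) (hqroot : Phi α β π q = 0)
    (hqmax : ∀ a : ℝ, 0 ≤ a → Phi α β π a = 0 → a ≤ q) :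
    (∀ r : ℝ, 0 < r → ∃ l : ℝ, 0 < l ∧ 0 < PhiIoi α β π r l) ∧
    (∀ inv : ℝ → ℝ → ℝ,
      (∀ r : ℝ, 0 < r → ∀ a : ℝ, 0 ≤ a →
        0 ≤ inv r a ∧ PhiIoi α β π r (inv r a) = a ∧
        (∀ b : ℝ, 0 ≤ b → PhiIoi α β π r b = a → b ≤ inv r a)) →
      Tendsto (fun r => inv r ((π (Set.Ioi r)).toReal)) atTop (nhds q) ∧
      Tendsto (fun r => inv r 0) atTop (nhds q)) :=
  truncated_inverse_limit_general α β hβ π hsupp hint hH0 q hq0 hqroot hqmax
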